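/- arXiv:1707.07786 — 2 statements merged into one kernel-verified Lean document; each statement's English description precedes it below -/
import Mathlib

section
/- Let (G,X) be a G-system, x ∈ X, and F = (F_n)_{n∈D} a Følner net in G. Suppose C_F(x) is not S-generic, i.e., there is no point z ∈ C_F(x) with C_F(z) = C_F(x). Then there exists a point y ∈ C_F(x) such that the pair {x,y} is Li–Yorke chaotic for (G,X) and, for every ε > 0, the set N(x, B_ε(y)) is a central set in G and has positive upper density relative to F, i.e., d̄_F(N(x, B_ε(y))) > 0. -/
open Filter Metric Set

section Defs

variable {G : Type*} [Group G] [DecidableEq G]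
variable {D : Type*} [Preorder D]

/-- `F` is a (left) Følner net in `G`. -/
def IsFolnerNet (F : D → Finset G) : Prop :=
  (∀ n, (F n).Nonempty) ∧
    ∀ g : G,
      Tendsto (fun n : D =>
          ((symmDiff ((F n).image fun h => g * h) (F n)).card : ℝ) / (F n).card)
        atTop (nhds 0)

/-- Upper density of `A ⊆ G` relative to the net `F`. -/
noncomputable def upperDensity (F : D → Finset G) (A : Set G) : ℝ :=
  sSup {α : ℝ | ∀ m : D, ∃ n : D, m ≤ n ∧
    α ≤ (((F n : Set G) ∩ A).ncard : ℝ) / (F n).card}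

variable {X : Type*} [MetricSpace X] [MulAction G X]

/-- The minimal `F`-center of attraction of `x`. -/
def minCenter (F : D → Finset G) (x : X) : Set X :=
  {y : X | ∀ U : Set X, IsOpen U → y ∈ U → 0 < upperDensity F {g : G | g • x ∈ U}}

end Defs

/-- The pair `{x, y}` is proximal. -/
def IsProximalPair (G : Type*) [Group G] {X : Type*} [MetricSpace X] [MulAction G X]
    (x y : X) : Prop :=
  ∃ t : ℕ → G, Tendsto (fun n => dist ((t n) • x) ((t n) • y)) atTop (nhds 0)

/-- The pair `{x, y}` is asymptotic. -/
def IsAsymptoticPair (G : Type*) [Group G] {X : Type*} [MetricSpace X] [MulAction G X]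
    (x y : X) : Prop :=
  ∀ ε : ℝ, 0 < ε → ∃ F : Finset G, ∀ g : G, g ∉ F → dist (g • x) (g • y) < ε

section Ultrafilters

variable {G : Type} [Group G]

/-- The product of two ultrafilters on `G`: `A ∈ p ⬝ q ↔ {g | {h | g * h ∈ A} ∈ q} ∈ p`. -/
noncomputable def ufMul (p q : Ultrafilter G) : Ultrafilter G :=
  p.bind fun a => q.map fun b => a * b

/-- A left ideal of `βG`: a nonempty `L` with `βG ⬝ L ⊆ L`. -/
def IsLeftIdealUF (L : Set (Ultrafilter G)) : Prop :=
  L.Nonempty ∧ ∀ p : Ultrafilter G, ∀ q ∈ L, ufMul p q ∈ L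

/-- A minimal left ideal of `βG`: a left ideal containing no proper left ideal. -/
def IsMinimalLeftIdealUF (L : Set (Ultrafilter G)) : Prop :=
  IsLeftIdealUF L ∧ ∀ L' ⊆ L, IsLeftIdealUF L' → L' = L

/-- A minimal idempotent of `βG`: an idempotent lying in some minimal left ideal. -/
def IsMinimalIdempotentUF (p : Ultrafilter G) : Prop :=
  ufMul p p = p ∧ ∃ L : Set (Ultrafilter G), IsMinimalLeftIdealUF L ∧ p ∈ L

/-- `S ⊆ G` is a central set: it belongs to some minimal idempotent ultrafilter. -/
def IsCentralSet (S : Set G) : Prop :=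
  ∃ p : Ultrafilter G, IsMinimalIdempotentUF p ∧ S ∈ p

end Ultrafilters

/-!
Ultrafilters on `G` all of whose members have positive upper density form a closed left ideal
of `βG`: it is a left ideal because upper density along a Følner net does not increase under
left translation, and it is nonempty because the sets of upper density zero form a proper ideal
of subsets of `G`. A minimal closed left ideal inside it is a minimal left ideal and contains
an idempotent `u` (Ellis–Numakura). Let `y` be the `u`-limit of `g • x`. Idempotence of `u`
makes `y` also the `u`-limit of `g • y`, so `{x, y}` is proximal, and every `N(x, B_ε(y))` lies
in `u`, hence is central and of positive upper density. Removing a finite set does not change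
upper density, so asymptotic points have the same minimal center of attraction; as `C_F(x)` is
not S-generic, `{x, y}` is not asymptotic.
-/

open Topology

attribute [local instance] Ultrafilter.mul Ultrafilter.semigroup

section Density

variable {G : Type*} {D : Type*} {F : D → Finset G}

noncomputable def densityRatio (F : D → Finset G) (A : Set G) (n : D) : ℝ :=
  (((F n : Set G) ∩ A).ncard : ℝ) / (F n).card

lemma densityRatio_nonneg (A : Set G) (n : D) : 0 ≤ densityRatio F A n := by
  unfold densityRatio; positivity

lemma densityRatio_le_one (A : Set G) (n : D) : densityRatio F A n ≤ 1 := by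
  refine div_le_one_of_le₀ ?_ (Nat.cast_nonneg _)
  rw [← Set.ncard_coe_finset]
  exact_mod_cast Set.ncard_le_ncard Set.inter_subset_left (F n).finite_toSet

lemma densityRatio_mono {A B : Set G} (h : A ⊆ B) (n : D) :
    densityRatio F A n ≤ densityRatio F B n := by
  unfold densityRatio
  gcongr
  exact (F n).finite_toSet.inter_of_left B

lemma densityRatio_union_le (A B : Set G) (n : D) :
    densityRatio F (A ∪ B) n ≤ densityRatio F A n + densityRatio F B n := by
  unfold densityRatio
  rw [← add_div, Set.inter_union_distrib_left]
  gcongr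
  exact_mod_cast Set.ncard_union_le _ _

lemma densityRatio_preimage_mul_le [Group G] [DecidableEq G] (g : G) (A : Set G) (n : D) :
    densityRatio F ((g * ·) ⁻¹' A) n ≤ densityRatio F A n +
      ((symmDiff ((F n).image (g * ·)) (F n)).card : ℝ) / (F n).card := by
  set T := (F n).image (g * ·)
  have hmaps : (g * ·) '' ((F n : Set G) ∩ (g * ·) ⁻¹' A) ⊆
      ((F n : Set G) ∩ A) ∪ ↑(T \ F n) := by
    rintro - ⟨h, ⟨hF, hA⟩, rfl⟩
    by_cases hgh : g * h ∈ F n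
    · exact Or.inl ⟨hgh, hA⟩
    · exact Or.inr (Finset.mem_coe.2 (Finset.mem_sdiff.2 ⟨Finset.mem_image_of_mem _ hF, hgh⟩))
  have hcard : ((F n : Set G) ∩ (g * ·) ⁻¹' A).ncard ≤
      ((F n : Set G) ∩ A).ncard + (symmDiff T (F n)).card := calc
    _ = ((g * ·) '' ((F n : Set G) ∩ (g * ·) ⁻¹' A)).ncard :=
      (Set.ncard_image_of_injective _ (mul_right_injective g)).symm
    _ ≤ (((F n : Set G) ∩ A) ∪ ↑(T \ F n)).ncard :=
      Set.ncard_le_ncard hmaps (((F n).finite_toSet.inter_of_left A).union (T \ F n).finite_toSet)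
    _ ≤ ((F n : Set G) ∩ A).ncard + (T \ F n).card := by
      rw [← Set.ncard_coe_finset (T \ F n)]; exact Set.ncard_union_le _ _
    _ ≤ _ := by
      gcongr
      rw [symmDiff_def]; exact Finset.subset_union_left
  unfold densityRatio
  rw [← add_div]
  gcongr
  exact_mod_cast hcard

lemma densityRatio_le_ncard_div {S : Set G} (hS : S.Finite) (n : D) :
    densityRatio F S n ≤ S.ncard / (F n).card := by
  unfold densityRatio
  gcongr
  exact Set.inter_subset_right

end Density

section UpperDensity

variable {G : Type*} {D : Type*} [Preorder D] [IsDirected D (· ≤ ·)] [Nonempty D]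
  {F : D → Finset G}

lemma upperDensity_eq_sSup_frequently (A : Set G) :
    upperDensity F A = sSup {α : ℝ | ∃ᶠ n in atTop, α ≤ densityRatio F A n} := by
  simp only [frequently_atTop]; rfl

lemma le_upperDensity {A : Set G} {α : ℝ} (h : ∃ᶠ n in atTop, α ≤ densityRatio F A n) :
    α ≤ upperDensity F A := by
  rw [upperDensity_eq_sSup_frequently]
  refine le_csSup ⟨1, fun β hβ => ?_⟩ h
  obtain ⟨n, hn⟩ := hβ.exists
  exact hn.trans (densityRatio_le_one A n)

lemma upperDensity_nonneg (A : Set G) : 0 ≤ upperDensity F A :=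
  le_upperDensity (Frequently.of_forall fun n => densityRatio_nonneg A n)

lemma eventually_densityRatio_lt {A : Set G} {β : ℝ} (h : upperDensity F A < β) :
    ∀ᶠ n in atTop, densityRatio F A n < β := by
  by_contra hβ
  simp only [not_eventually, not_lt] at hβ
  exact (le_upperDensity hβ).not_gt h

lemma upperDensity_le_of_eventually {A : Set G} {c : ℝ}
    (h : ∀ ε > 0, ∀ᶠ n in atTop, densityRatio F A n ≤ c + ε) : upperDensity F A ≤ c := by
  rw [upperDensity_eq_sSup_frequently]
  refine csSup_le ⟨0, Frequently.of_forall fun n => densityRatio_nonneg A n⟩ fun α hα => ?_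
  refine le_of_forall_pos_le_add fun ε hε => ?_
  obtain ⟨n, hαn, hn⟩ := (hα.and_eventually (h ε hε)).exists
  exact hαn.trans hn

lemma upperDensity_empty : upperDensity F ∅ = 0 :=
  (upperDensity_le_of_eventually fun _ hε => .of_forall fun n => by
    simp [densityRatio, hε.le]).antisymm (upperDensity_nonneg ∅)

lemma upperDensity_mono {A B : Set G} (h : A ⊆ B) : upperDensity F A ≤ upperDensity F B :=
  upperDensity_le_of_eventually fun ε hε => by
    filter_upwards [eventually_densityRatio_lt (lt_add_of_pos_right _ hε)] with n hn
    exact (densityRatio_mono h n).trans hn.le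

lemma upperDensity_union_le (A B : Set G) :
    upperDensity F (A ∪ B) ≤ upperDensity F A + upperDensity F B :=
  upperDensity_le_of_eventually fun ε hε => by
    filter_upwards [eventually_densityRatio_lt (lt_add_of_pos_right (upperDensity F A) (half_pos hε)),
      eventually_densityRatio_lt (lt_add_of_pos_right (upperDensity F B) (half_pos hε))]
      with n hA hB
    linarith [densityRatio_union_le (F := F) A B n]

end UpperDensity

section Folner

variable {G : Type*} [Group G] [DecidableEq G] {D : Type*} [Preorder D] {F : D → Finset G}

lemma IsFolnerNet.tendsto_card [Infinite G] (hF : IsFolnerNet F) :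
    Tendsto (fun n => (F n).card) atTop atTop := by
  refine Filter.tendsto_atTop.2 fun k : ℕ => ?_
  obtain ⟨S, hS⟩ := Infinite.exists_subset_card_eq G (k + 1)
  have hsmall : ∀ᶠ n in atTop, ∀ g ∈ S,
      ((symmDiff ((F n).image (g * ·)) (F n)).card : ℝ) / (F n).card < 1 / (k + 1) :=
    (eventually_all_finset S).2 fun g _ => (hF.2 g).eventually (gt_mem_nhds (by positivity))
  filter_upwards [hsmall] with n hn
  by_contra! hlt
  obtain ⟨f, hf⟩ := hF.1 n
  obtain ⟨g, hgS, hgf⟩ : ∃ g ∈ S, g * f ∉ F n := by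
    by_contra! hall
    have := Finset.card_le_card_of_injOn (· * f) hall (mul_left_injective f).injOn
    omega
  have hpos : (0 : ℝ) < (F n).card := Nat.cast_pos.2 (hF.1 n).card_pos
  have hone : 1 ≤ (symmDiff ((F n).image (g * ·)) (F n)).card :=
    Finset.card_pos.2 ⟨g * f, Finset.mem_symmDiff.2 (Or.inl ⟨Finset.mem_image_of_mem _ hf, hgf⟩)⟩
  have := hn g hgS
  rw [div_lt_div_iff₀ hpos (by positivity)] at this
  have : ((F n).card : ℝ) + 1 ≤ k + 1 := by exact_mod_cast Nat.succ_le_succ hlt.le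
  nlinarith [(Nat.one_le_cast (α := ℝ)).2 hone]

variable [IsDirected D (· ≤ ·)] [Nonempty D]

lemma IsFolnerNet.one_le_upperDensity_univ (hF : IsFolnerNet F) :
    1 ≤ upperDensity F (Set.univ : Set G) :=
  le_upperDensity <| Frequently.of_forall fun n => by
    rw [densityRatio, Set.inter_univ, Set.ncard_coe_finset,
      div_self (Nat.cast_ne_zero.2 (hF.1 n).card_pos.ne')]

lemma IsFolnerNet.upperDensity_preimage_mul_le (hF : IsFolnerNet F) (g : G) (A : Set G) :
    upperDensity F ((g * ·) ⁻¹' A) ≤ upperDensity F A :=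
  upperDensity_le_of_eventually fun ε hε => by
    filter_upwards [eventually_densityRatio_lt (lt_add_of_pos_right (upperDensity F A) (half_pos hε)),
      (hF.2 g).eventually (gt_mem_nhds (half_pos hε))] with n hA hg
    linarith [densityRatio_preimage_mul_le (F := F) g A n]

lemma IsFolnerNet.upperDensity_of_finite [Infinite G] (hF : IsFolnerNet F) {S : Set G}
    (hS : S.Finite) : upperDensity F S = 0 := by
  refine (upperDensity_le_of_eventually fun ε hε => ?_).antisymm (upperDensity_nonneg S)
  filter_upwards [((tendsto_const_div_atTop_nhds_zero_nat (S.ncard : ℝ)).comp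
    hF.tendsto_card).eventually (gt_mem_nhds hε)] with n hn
  dsimp only [Function.comp_apply] at hn
  linarith [densityRatio_le_ncard_div (F := F) hS n]

lemma IsFolnerNet.upperDensity_diff_of_finite [Infinite G] (hF : IsFolnerNet F) (A : Set G)
    {S : Set G} (hS : S.Finite) : upperDensity F (A \ S) = upperDensity F A := by
  refine (upperDensity_mono Set.sdiff_subset).antisymm ?_
  calc upperDensity F A ≤ upperDensity F (A \ S ∪ S) := upperDensity_mono (by simp)
    _ ≤ upperDensity F (A \ S) + upperDensity F S := upperDensity_union_le _ _
    _ = upperDensity F (A \ S) := by rw [hF.upperDensity_of_finite hS, add_zero]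

end Folner

section LeftIdeal

variable {M : Type*} [Semigroup M]

def IsLeftIdeal (L : Set M) : Prop :=
  L.Nonempty ∧ ∀ p, ∀ q ∈ L, p * q ∈ L

def IsMinimalLeftIdeal (L : Set M) : Prop :=
  IsLeftIdeal L ∧ ∀ L' ⊆ L, IsLeftIdeal L' → L' = L

variable [TopologicalSpace M] [CompactSpace M]

lemma IsLeftIdeal.sInter_of_isChain {c : Set (Set M)} (hc : IsChain (· ⊆ ·) c) (hne : c.Nonempty)
    (hideal : ∀ L ∈ c, IsLeftIdeal L) (hclosed : ∀ L ∈ c, IsClosed L) : IsLeftIdeal (⋂₀ c) := by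
  have : Nonempty c := hne.to_subtype
  have : Std.Refl (flip (· ⊆ ·) : Set M → Set M → Prop) := ⟨fun _ => subset_rfl⟩
  refine ⟨IsCompact.nonempty_sInter_of_directed_nonempty_isCompact_isClosed hc.symm.directedOn
    (fun L hL => (hideal L hL).1) (fun L hL => (hclosed L hL).isCompact) hclosed, ?_⟩
  exact fun p q hq => Set.mem_sInter.2 fun L hL => (hideal L hL).2 p q (Set.mem_sInter.1 hq L hL)

lemma exists_minimal_isClosed_isLeftIdeal_subset {S : Set M} (hS : IsLeftIdeal S)
    (hSc : IsClosed S) :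
    ∃ L ⊆ S, Minimal (fun L : Set M => IsLeftIdeal L ∧ IsClosed L) L := by
  refine zorn_superset_nonempty {L | IsLeftIdeal L ∧ IsClosed L} (fun c hcS hc hne => ?_) S ⟨hS, hSc⟩
  refine ⟨⋂₀ c, ⟨?_, isClosed_sInter fun L hL => (hcS hL).2⟩, fun _ => Set.sInter_subset_of_mem⟩
  exact .sInter_of_isChain hc hne (fun L hL => (hcS hL).1) fun L hL => (hcS hL).2

variable [T2Space M] (hmul : ∀ q : M, Continuous (· * q))
include hmul

lemma isMinimalLeftIdeal_of_minimal {L : Set M}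
    (hL : Minimal (fun L : Set M => IsLeftIdeal L ∧ IsClosed L) L) : IsMinimalLeftIdeal L := by
  refine ⟨hL.1.1, fun L' hsub hL' => ?_⟩
  obtain ⟨q, hq⟩ := hL'.1
  have hK : Set.range (· * q) ⊆ L' := Set.range_subset_iff.2 fun p => hL'.2 p q hq
  have hKideal : IsLeftIdeal (Set.range (· * q)) :=
    ⟨⟨q * q, q, rfl⟩, by rintro p - ⟨r, rfl⟩; exact ⟨p * r, mul_assoc p r q⟩⟩
  exact hsub.antisymm ((hL.2 ⟨hKideal, (isCompact_range (hmul q)).isClosed⟩ (hK.trans hsub)).trans hK)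

lemma exists_isMinimalLeftIdeal_subset_idempotent_mem {S : Set M} (hS : IsLeftIdeal S)
    (hSc : IsClosed S) : ∃ L ⊆ S, IsMinimalLeftIdeal L ∧ ∃ u ∈ L, u * u = u := by
  obtain ⟨L, hLS, hL⟩ := exists_minimal_isClosed_isLeftIdeal_subset hS hSc
  exact ⟨L, hLS, isMinimalLeftIdeal_of_minimal hmul hL,
    exists_idempotent_in_compact_subsemigroup hmul L hL.1.1.1 hL.1.2.isCompact
      fun p _ q hq => hL.1.1.2 p q hq⟩

end LeftIdeal

section PositiveDensity

variable {G : Type*} {D : Type*} [Preorder D] {F : D → Finset G}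

def positiveDensityUltrafilters (F : D → Finset G) : Set (Ultrafilter G) :=
  {u | ∀ A ∈ u, 0 < upperDensity F A}

lemma isClosed_positiveDensityUltrafilters : IsClosed (positiveDensityUltrafilters F) := by
  simp only [positiveDensityUltrafilters, Set.ofPred_forall]
  refine isClosed_iInter fun A => ?_
  by_cases hA : 0 < upperDensity F A
  · simp [hA]
  · simp only [hA, imp_false]
    exact (ultrafilter_isOpen_basic A).isClosed_compl

end PositiveDensity

section Ultrafilter

variable {G : Type} [Group G]

lemma ufMul_eq_mul (p q : Ultrafilter G) : ufMul p q = p * q :=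
  Ultrafilter.coe_injective (Filter.ext fun _ => Iff.rfl)

lemma isLeftIdealUF_iff {L : Set (Ultrafilter G)} : IsLeftIdealUF L ↔ IsLeftIdeal L := by
  simp only [IsLeftIdealUF, IsLeftIdeal, ufMul_eq_mul]

lemma isMinimalLeftIdealUF_iff {L : Set (Ultrafilter G)} :
    IsMinimalLeftIdealUF L ↔ IsMinimalLeftIdeal L := by
  simp only [IsMinimalLeftIdealUF, IsMinimalLeftIdeal, isLeftIdealUF_iff]

lemma exists_isMinimalIdempotentUF_mem {S : Set (Ultrafilter G)} (hS : IsLeftIdealUF S)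
    (hSc : IsClosed S) : ∃ u ∈ S, IsMinimalIdempotentUF u := by
  obtain ⟨L, hLS, hL, u, huL, hu⟩ := exists_isMinimalLeftIdeal_subset_idempotent_mem
    Ultrafilter.continuous_mul_left (isLeftIdealUF_iff.1 hS) hSc
  exact ⟨u, hLS huL, by rwa [ufMul_eq_mul], L, isMinimalLeftIdealUF_iff.2 hL, huL⟩

variable [DecidableEq G] {D : Type*} [Preorder D] [IsDirected D (· ≤ ·)] [Nonempty D]
  {F : D → Finset G}

lemma IsFolnerNet.positiveDensityUltrafilters_nonempty (hF : IsFolnerNet F) :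
    (positiveDensityUltrafilters F).Nonempty := by
  let conull : Filter G := .comk (upperDensity F · ≤ 0) upperDensity_empty.le
    (fun t ht s hst => (upperDensity_mono hst).trans ht)
    (fun s hs t ht => (upperDensity_union_le s t).trans (by linarith))
  have : conull.NeBot := ⟨fun h => by
    have := Filter.empty_mem_iff_bot.2 h
    simp only [conull, Filter.mem_comk, Set.compl_empty] at this
    linarith [hF.one_le_upperDensity_univ]⟩
  refine ⟨.of conull, fun A hA => ?_⟩
  by_contra! hA0
  have : Aᶜ ∈ conull := by simpa only [conull, Filter.mem_comk, compl_compl] using hA0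
  exact Ultrafilter.compl_notMem_iff.2 hA (Ultrafilter.of_le conull this)

lemma IsFolnerNet.isLeftIdealUF_positiveDensityUltrafilters (hF : IsFolnerNet F) :
    IsLeftIdealUF (positiveDensityUltrafilters F) := by
  refine ⟨hF.positiveDensityUltrafilters_nonempty, fun p q hq A hA => ?_⟩
  obtain ⟨a, ha⟩ := Ultrafilter.nonempty_of_mem (show {a | (a * ·) ⁻¹' A ∈ q} ∈ p from hA)
  exact (hq _ ha).trans_le (hF.upperDensity_preimage_mul_le a A)

lemma IsFolnerNet.exists_isMinimalIdempotentUF_forall_pos_upperDensity (hF : IsFolnerNet F) :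
    ∃ u : Ultrafilter G, IsMinimalIdempotentUF u ∧ ∀ A ∈ u, 0 < upperDensity F A :=
  let ⟨u, hu, hmin⟩ := exists_isMinimalIdempotentUF_mem hF.isLeftIdealUF_positiveDensityUltrafilters
    isClosed_positiveDensityUltrafilters
  ⟨u, hmin, hu⟩

end Ultrafilter

section Dynamics

lemma tendsto_smul_of_mul_self_eq {G X : Type*} [Monoid G] [TopologicalSpace X] [RegularSpace X]
    [MulAction G X] [ContinuousConstSMul G X] {u : Ultrafilter G} (hu : u * u = u) {x y : X}
    (hy : Tendsto (· • x) (u : Filter G) (𝓝 y)) : Tendsto (· • y) (u : Filter G) (𝓝 y) := by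
  refine (closed_nhds_basis y).tendsto_right_iff.2 fun V ⟨hV, hVc⟩ => ?_
  have hxV : ∀ᶠ g in ((u * u : Ultrafilter G) : Filter G), g • x ∈ V := by
    rw [hu]; exact hy hV
  filter_upwards [(Ultrafilter.eventually_mul u u _).1 hxV] with a ha
  exact hVc.mem_of_tendsto ((continuous_const_smul a).tendsto y |>.comp hy)
    (by simpa only [Function.comp_def, mul_smul] using ha)

variable {G X : Type*} [Group G] [MetricSpace X] [MulAction G X]

lemma isProximalPair_of_tendsto {l : Filter G} [l.NeBot] {x y z : X}
    (hx : Tendsto (· • x) l (𝓝 z)) (hy : Tendsto (· • y) l (𝓝 z)) : IsProximalPair G x y := by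
  have hdist : Tendsto (fun g : G => dist (g • x) (g • y)) l (𝓝 0) := by
    simpa using hx.dist hy
  have : (comap (fun g : G => dist (g • x) (g • y)) (𝓝 0)).NeBot :=
    neBot_of_le (tendsto_iff_comap.1 hdist)
  obtain ⟨t, ht⟩ := exists_seq_tendsto (comap (fun g : G => dist (g • x) (g • y)) (𝓝 0))
  exact ⟨t, tendsto_comap_iff.1 ht⟩

lemma IsAsymptoticPair.symm {x y : X} (h : IsAsymptoticPair G x y) : IsAsymptoticPair G y x :=
  fun ε hε => (h ε hε).imp fun _ hF g hg => dist_comm (g • y) (g • x) ▸ hF g hg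

lemma IsAsymptoticPair.minCenter_subset [Infinite G] [DecidableEq G] {D : Type*} [Preorder D]
    [IsDirected D (· ≤ ·)] [Nonempty D] {F : D → Finset G} (hF : IsFolnerNet F) {x y : X}
    (h : IsAsymptoticPair G x y) : minCenter F x ⊆ minCenter F y := by
  intro w hw U hU hwU
  obtain ⟨ε, hε, hball⟩ := Metric.isOpen_iff.1 hU w hwU
  obtain ⟨K, hK⟩ := h (ε / 2) (half_pos hε)
  have hsub : {g : G | g • x ∈ ball w (ε / 2)} \ K ⊆ {g | g • y ∈ U} := by
    rintro g ⟨hgx, hgK⟩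
    refine hball (mem_ball.2 ?_)
    have := dist_triangle_left (g • y) w (g • x)
    linarith [mem_ball.1 hgx, hK g hgK]
  calc 0 < upperDensity F {g : G | g • x ∈ ball w (ε / 2)} :=
        hw _ isOpen_ball (mem_ball_self (half_pos hε))
    _ = upperDensity F ({g : G | g • x ∈ ball w (ε / 2)} \ K) :=
        (hF.upperDensity_diff_of_finite _ K.finite_toSet).symm
    _ ≤ upperDensity F {g | g • y ∈ U} := upperDensity_mono hsub

end Dynamics

/-- Corollary 3.3: if `C_F(x)` is not S-generic, then there is `y ∈ C_F(x)` such that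
`{x, y}` is Li–Yorke chaotic and, for every `ε > 0`, `N(x, B_ε(y))` is a central set of `G`
with positive upper density relative to `F`. -/
theorem central_liYorke_of_not_Sgeneric
    {G : Type} [Group G] [Infinite G] [DecidableEq G]
    {D : Type*} [Preorder D] [IsDirected D (· ≤ ·)] [Nonempty D]
    {X : Type*} [MetricSpace X] [CompactSpace X] [MulAction G X]
    (hcont : ∀ g : G, Continuous fun y : X => g • y)
    (Fol : D → Finset G) (hFol : IsFolnerNet Fol) (x : X)
    (hnS : ¬ ∃ z ∈ minCenter Fol x, minCenter Fol z = minCenter Fol x) :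
    ∃ y ∈ minCenter Fol x,
      (IsProximalPair G x y ∧ ¬ IsAsymptoticPair G x y) ∧
      ∀ ε : ℝ, 0 < ε →
        IsCentralSet {g : G | g • x ∈ Metric.ball y ε} ∧
        0 < upperDensity Fol {g : G | g • x ∈ Metric.ball y ε} := by
  have : ContinuousConstSMul G X := ⟨hcont⟩
  obtain ⟨u, hu_min, hu_pos⟩ := hFol.exists_isMinimalIdempotentUF_forall_pos_upperDensity
  set y := (u.map (· • x)).lim
  have hxy : Tendsto (· • x) (u : Filter G) (𝓝 y) := (u.map (· • x)).le_nhds_lim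
  have hyy : Tendsto (· • y) (u : Filter G) (𝓝 y) :=
    tendsto_smul_of_mul_self_eq (ufMul_eq_mul u u ▸ hu_min.1) hxy
  have hball : ∀ ε > 0, {g : G | g • x ∈ ball y ε} ∈ u := fun ε hε => hxy (ball_mem_nhds y hε)
  have hyC : y ∈ minCenter Fol x := fun U hU hyU => hu_pos _ (hxy (hU.mem_nhds hyU))
  refine ⟨y, hyC, ⟨isProximalPair_of_tendsto hxy hyy, fun hasym => hnS ⟨y, hyC, ?_⟩⟩,
    fun ε hε => ⟨⟨u, hu_min, hball ε hε⟩, hu_pos _ (hball ε hε)⟩⟩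
  exact (hasym.symm.minCenter_subset hFol).antisymm (hasym.minCenter_subset hFol)
end

section
/- Let (G,X) be a G-system, x ∈ X, and F = (F_n)_{n∈D} a Følner net in G. Suppose C_F(x) is not S-generic (there is no z ∈ C_F(x) with C_F(z) = C_F(x)) and that the almost periodic points of (G,X) are dense in C_F(x). Then there exists ε > 0 such that for every a ∈ X, every x̂ ∈ C_F(x), and every open neighborhood U of x̂, there exist y ∈ U and g ∈ G with d(ga, gy) ≥ ε. -/
open Filter Metric Set

/-- `S ⊆ G` is syndetic: there is a finite `F ⊆ G` with `⋃_{f ∈ F} f⁻¹ S = G`. -/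
def IsSyndeticSet {G : Type*} [Group G] (S : Set G) : Prop :=
  ∃ F : Finset G, ∀ g : G, ∃ f ∈ F, f * g ∈ S

/-- `z` is an almost periodic point: `N(z, U)` is syndetic for every open neighborhood `U`. -/
def IsAlmostPeriodicPt (G : Type*) [Group G] {X : Type*} [MetricSpace X] [MulAction G X]
    (z : X) : Prop :=
  ∀ U : Set X, IsOpen U → z ∈ U → IsSyndeticSet {g : G | g • z ∈ U}


set_option linter.unusedSectionVars false
set_option maxHeartbeats 1000000

section Aux
variable {G : Type*} [Group G] [DecidableEq G]
variable {D : Type*} [Preorder D] [Nonempty D] [IsDirected D (· ≤ ·)]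

def densSet (F : D → Finset G) (A : Set G) : Set ℝ :=
  {α : ℝ | ∀ m : D, ∃ n : D, m ≤ n ∧
    α ≤ (((F n : Set G) ∩ A).ncard : ℝ) / (F n).card}

lemma upperDensity_eq (F : D → Finset G) (A : Set G) :
    upperDensity F A = sSup (densSet F A) := rfl

lemma zero_mem_densSet (F : D → Finset G) (A : Set G) : (0:ℝ) ∈ densSet F A := by
  intro m
  exact ⟨m, le_refl m, by positivity⟩

lemma ratio_le_one (F : D → Finset G) (hF : ∀ n, (F n).Nonempty) (A : Set G) (n : D) :
    (((F n : Set G) ∩ A).ncard : ℝ) / (F n).card ≤ 1 := by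
  have hc : (0:ℝ) < (F n).card := by exact_mod_cast Finset.card_pos.mpr (hF n)
  rw [div_le_one hc]
  have h1 : ((F n : Set G) ∩ A).ncard ≤ ((F n : Set G)).ncard :=
    Set.ncard_le_ncard inter_subset_left (F n).finite_toSet
  have h2 : ((F n : Set G)).ncard = (F n).card := Set.ncard_coe_finset _
  exact_mod_cast h1.trans h2.le

lemma bddAbove_densSet (F : D → Finset G) (hF : ∀ n, (F n).Nonempty) (A : Set G) :
    BddAbove (densSet F A) := by
  refine ⟨1, fun α hα => ?_⟩
  obtain ⟨m⟩ : Nonempty D := inferInstance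
  obtain ⟨n, -, hn⟩ := hα m
  exact hn.trans (ratio_le_one F hF A n)

lemma exists_pos_mem_densSet {F : D → Finset G} {A : Set G}
    (h : 0 < upperDensity F A) : ∃ α ∈ densSet F A, 0 < α := by
  by_contra hc
  push_neg at hc
  have : upperDensity F A ≤ 0 :=
    csSup_le ⟨0, zero_mem_densSet F A⟩ hc
  linarith

/-- positive upper density implies the set is nonempty -/
lemma nonempty_of_upperDensity_pos {F : D → Finset G} {A : Set G}
    (h : 0 < upperDensity F A) : A.Nonempty := by
  obtain ⟨α, hα, hαpos⟩ := exists_pos_mem_densSet h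
  obtain ⟨m⟩ : Nonempty D := inferInstance
  obtain ⟨n, -, hn⟩ := hα m
  have hpos : 0 < (((F n : Set G) ∩ A).ncard : ℝ) / (F n).card := lt_of_lt_of_le hαpos hn
  have : ((F n : Set G) ∩ A).ncard ≠ 0 := by
    intro h0
    rw [h0] at hpos; simp at hpos
  obtain ⟨g, hg⟩ := Set.nonempty_of_ncard_ne_zero this
  exact ⟨g, hg.2⟩

/-- monotonicity (positivity version) -/
lemma upperDensity_pos_mono (F : D → Finset G) (hF : ∀ n, (F n).Nonempty)
    {A B : Set G} (hAB : A ⊆ B) (h : 0 < upperDensity F A) : 0 < upperDensity F B := by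
  obtain ⟨α, hα, hαpos⟩ := exists_pos_mem_densSet h
  have hmem : α ∈ densSet F B := by
    intro m
    obtain ⟨n, hmn, hn⟩ := hα m
    refine ⟨n, hmn, hn.trans ?_⟩
    have : ((F n : Set G) ∩ A).ncard ≤ ((F n : Set G) ∩ B).ncard :=
      Set.ncard_le_ncard (inter_subset_inter_right _ hAB) ((F n).finite_toSet.inter_of_left _)
    gcongr
  calc (0:ℝ) < α := hαpos
    _ ≤ upperDensity F B := le_csSup (bddAbove_densSet F hF B) hmem


/-- key counting estimate -/
lemma ncard_inter_le (F : D → Finset G) (g : G) (A : Set G) (n : D) :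
    (((F n : Set G) ∩ A).ncard : ℝ) ≤ (((F n : Set G) ∩ ((g * ·) '' A)).ncard : ℝ)
      + ((symmDiff ((F n).image fun h => g * h) (F n)).card : ℝ) := by
  have hinj : Function.Injective (g * ·) := fun a b h => by simpa using h
  have h1 : ((F n : Set G) ∩ A).ncard = ((g * ·) '' ((F n : Set G) ∩ A)).ncard :=
    (Set.ncard_image_of_injective _ hinj).symm
  have hsub : (g * ·) '' ((F n : Set G) ∩ A) ⊆
      ((F n : Set G) ∩ ((g * ·) '' A)) ∪ ((symmDiff ((F n).image fun h => g * h) (F n) : Finset G) : Set G) := by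
    rintro w ⟨h, ⟨hhF, hhA⟩, rfl⟩
    by_cases hw : g * h ∈ F n
    · exact Or.inl ⟨hw, ⟨h, hhA, rfl⟩⟩
    · refine Or.inr ?_
      have : g * h ∈ (F n).image fun h => g * h := Finset.mem_image_of_mem _ hhF
      simp only [Finset.coe_symmDiff, Set.mem_symmDiff]
      exact Or.inl ⟨by exact_mod_cast this, by exact_mod_cast hw⟩
  have h2 : ((g * ·) '' ((F n : Set G) ∩ A)).ncard ≤
      ((F n : Set G) ∩ ((g * ·) '' A)).ncard + ((symmDiff ((F n).image fun h => g * h) (F n) : Finset G) : Set G).ncard := by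
    refine le_trans (Set.ncard_le_ncard hsub ?_) (Set.ncard_union_le _ _)
    exact (((F n).finite_toSet.inter_of_left _)).union (Finset.finite_toSet _)
  have h3 : ((symmDiff ((F n).image fun h => g * h) (F n) : Finset G) : Set G).ncard
      = (symmDiff ((F n).image fun h => g * h) (F n)).card := Set.ncard_coe_finset _
  rw [h1]
  exact_mod_cast h3 ▸ h2

/-- translation invariance (positivity version) -/
lemma upperDensity_pos_smul {F : D → Finset G} (hFol : IsFolnerNet F) (g : G) {A : Set G}
    (h : 0 < upperDensity F A) : 0 < upperDensity F ((g * ·) '' A) := by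
  obtain ⟨α, hα, hαpos⟩ := exists_pos_mem_densSet h
  have hmem : α / 2 ∈ densSet F ((g * ·) '' A) := by
    intro m
    have hev : ∀ᶠ n in (atTop : Filter D),
        ((symmDiff ((F n).image fun h => g * h) (F n)).card : ℝ) / (F n).card < α / 2 :=
      Tendsto.eventually_lt_const (by linarith) (hFol.2 g)
    obtain ⟨m', hm'⟩ := mem_atTop_sets.mp hev
    obtain ⟨m2, hmm2, hm'm2⟩ := exists_ge_ge m m'
    obtain ⟨n, hn2, hnα⟩ := hα m2
    refine ⟨n, hmm2.trans hn2, ?_⟩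
    have hδ : ((symmDiff ((F n).image fun h => g * h) (F n)).card : ℝ) / (F n).card < α / 2 :=
      hm' n (hm'm2.trans hn2)
    have hcard : (0:ℝ) < (F n).card := by
      exact_mod_cast Finset.card_pos.mpr (hFol.1 n)
    have hkey := ncard_inter_le F g A n
    have hdiv : (((F n : Set G) ∩ A).ncard : ℝ) / (F n).card ≤
        (((F n : Set G) ∩ ((g * ·) '' A)).ncard : ℝ) / (F n).card
          + ((symmDiff ((F n).image fun h => g * h) (F n)).card : ℝ) / (F n).card := by
      rw [← add_div]
      exact div_le_div_of_nonneg_right hkey hcard.le |>.trans_eq rfl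
    linarith
  have : α / 2 ≤ upperDensity F ((g * ·) '' A) :=
    le_csSup (bddAbove_densSet F hFol.1 _) hmem
  linarith

/-- syndetic sets have positive upper density along any Følner net -/
lemma upperDensity_pos_of_syndetic {F : D → Finset G} (hFol : IsFolnerNet F)
    {S : Set G} (hS : IsSyndeticSet S) : 0 < upperDensity F S := by
  classical
  obtain ⟨K, hK⟩ := hS
  have hKne : K.Nonempty := by
    obtain ⟨k, hk, -⟩ := hK 1
    exact ⟨k, hk⟩
  have hKpos : (0:ℝ) < K.card := by exact_mod_cast Finset.card_pos.mpr hKne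
  -- pigeonhole at each time n
  have hpig : ∀ n : D, ∃ k ∈ K,
      (1 : ℝ) / K.card ≤ (((F n : Set G) ∩ {g | k * g ∈ S}).ncard : ℝ) / (F n).card := by
    intro n
    have hcard : (0:ℝ) < (F n).card := by exact_mod_cast Finset.card_pos.mpr (hFol.1 n)
    have hsub : F n ⊆ K.biUnion fun k => (F n).filter fun g => k * g ∈ S := by
      intro g hg
      obtain ⟨k, hk, hkg⟩ := hK g
      exact Finset.mem_biUnion.mpr ⟨k, hk, Finset.mem_filter.mpr ⟨hg, hkg⟩⟩
    have hsum : ((F n).card : ℝ) ≤ ∑ k ∈ K, (((F n).filter fun g => k * g ∈ S).card : ℝ) := by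
      have := (Finset.card_le_card hsub).trans (Finset.card_biUnion_le)
      exact_mod_cast this
    have hconst : ∑ k ∈ K, ((F n).card : ℝ) / K.card = (F n).card := by
      rw [Finset.sum_const, nsmul_eq_mul]
      field_simp
    have hex : ∃ k ∈ K, ((F n).card : ℝ) / K.card ≤ (((F n).filter fun g => k * g ∈ S).card : ℝ) := by
      by_contra hcon
      push_neg at hcon
      have : ∑ k ∈ K, (((F n).filter fun g => k * g ∈ S).card : ℝ)
          < ∑ k ∈ K, ((F n).card : ℝ) / K.card :=
        Finset.sum_lt_sum_of_nonempty hKne hcon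
      rw [hconst] at this
      linarith
    obtain ⟨k, hk, hkle⟩ := hex
    refine ⟨k, hk, ?_⟩
    have hEq : ((F n : Set G) ∩ {g | k * g ∈ S}).ncard
        = ((F n).filter fun g => k * g ∈ S).card := by
      rw [← Set.ncard_coe_finset]
      congr 1
      ext g
      simp [Finset.mem_filter, and_comm]
    rw [hEq]
    rw [div_le_div_iff₀ hKpos hcard]
    rw [div_le_iff₀ hKpos] at hkle
    nlinarith
  -- some k works cofinally
  have hcof : ∃ k ∈ K, ∀ m : D, ∃ n : D, m ≤ n ∧
      (1 : ℝ) / K.card ≤ (((F n : Set G) ∩ {g | k * g ∈ S}).ncard : ℝ) / (F n).card := by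
    by_contra hcon
    push_neg at hcon
    have h2 : ∀ k : G, ∃ m : D, k ∈ K → ∀ n : D, m ≤ n →
        (((F n : Set G) ∩ {g | k * g ∈ S}).ncard : ℝ) / (F n).card < 1 / K.card := by
      intro k
      by_cases hk : k ∈ K
      · obtain ⟨m, hm⟩ := hcon k hk
        exact ⟨m, fun _ n hn => by
          have := hm n
          exact this hn⟩
      · obtain ⟨m⟩ : Nonempty D := inferInstance
        exact ⟨m, fun h => absurd h hk⟩
    choose mf hmf using h2
    obtain ⟨M, hM⟩ := Finset.exists_le (K.image mf)
    obtain ⟨k, hk, hkM⟩ := hpig M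
    exact absurd hkM (not_le.mpr (hmf k hk M (hM _ (Finset.mem_image_of_mem mf hk))))
  obtain ⟨k, hk, hkcof⟩ := hcof
  have h1 : (1:ℝ) / K.card ≤ upperDensity F {g | k * g ∈ S} :=
    le_csSup (bddAbove_densSet F hFol.1 _) hkcof
  have h2 : 0 < upperDensity F {g | k * g ∈ S} := lt_of_lt_of_le (by positivity) h1
  have h3 := upperDensity_pos_smul hFol k h2
  refine upperDensity_pos_mono F hFol.1 ?_ h3
  rintro w ⟨g, hg, rfl⟩
  exact hg


section DynAux
variable {X : Type*} [MetricSpace X] [MulAction G X]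

/-- the minimal center of attraction is closed -/
lemma isClosed_minCenter (F : D → Finset G) (x : X) : IsClosed (minCenter F x) := by
  refine isClosed_of_closure_subset ?_
  intro y hy U hU hyU
  obtain ⟨c, hcU, hcC⟩ := _root_.mem_closure_iff.mp hy U hU hyU
  exact hcC U hU hcU

/-- the minimal center of attraction is invariant -/
lemma smul_mem_minCenter {F : D → Finset G} (hFol : IsFolnerNet F)
    (hcont : ∀ g : G, Continuous fun y : X => g • y) {x y : X}
    (hy : y ∈ minCenter F x) (g : G) : g • y ∈ minCenter F x := by
  intro U hU hgyU
  have hV : IsOpen ((fun w : X => g • w) ⁻¹' U) := hU.preimage (hcont g)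
  have h0 := hy _ hV hgyU
  refine upperDensity_pos_mono F hFol.1 ?_ (upperDensity_pos_smul hFol g h0)
  rintro w ⟨h, hh, rfl⟩
  simpa [mul_smul] using hh

/-- the minimal center is contained in the orbit closure -/
lemma minCenter_subset_closure_orbit (F : D → Finset G) (x : X) :
    minCenter F x ⊆ closure (MulAction.orbit G x) := by
  intro y hy
  rw [_root_.mem_closure_iff]
  intro U hU hyU
  obtain ⟨g, hg⟩ := nonempty_of_upperDensity_pos (hy U hU hyU)
  exact ⟨g • x, hg, MulAction.mem_orbit x g⟩

/-- orbit closures are invariant -/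
lemma smul_mem_closure_orbit (hcont : ∀ g : G, Continuous fun y : X => g • y) {x w : X}
    (hw : w ∈ closure (MulAction.orbit G x)) (g : G) :
    g • w ∈ closure (MulAction.orbit G x) := by
  refine map_mem_closure (hcont g) hw ?_
  rintro u ⟨h, rfl⟩
  exact ⟨g * h, (mul_smul g h x).symm ▸ rfl⟩

/-- minimality: an almost periodic point is in the orbit closure of any point of its
orbit closure -/
lemma ap_mem_closure_orbit (hcont : ∀ g : G, Continuous fun y : X => g • y) {p y : X}
    (hp : IsAlmostPeriodicPt G p) (hy : y ∈ closure (MulAction.orbit G p)) :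
    p ∈ closure (MulAction.orbit G y) := by
  rw [Metric.mem_closure_iff]
  intro δ hδ
  obtain ⟨K, hK⟩ := hp (ball p (δ/2)) isOpen_ball (mem_ball_self (by linarith))
  have hKne : K.Nonempty := by obtain ⟨k, hk, -⟩ := hK 1; exact ⟨k, hk⟩
  have hη : ∀ k : G, ∃ η > 0, ∀ w : X, dist w y < η → dist (k • w) (k • y) < δ/2 := by
    intro k
    exact Metric.continuous_iff.mp (hcont k) y (δ/2) (by linarith)
  choose η hη1 hη2 using hη
  set η0 := K.inf' hKne η with hη0def
  have hη0 : 0 < η0 := by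
    rw [hη0def, Finset.lt_inf'_iff]
    exact fun k _ => hη1 k
  obtain ⟨b, hb, hdb⟩ := Metric.mem_closure_iff.mp hy η0 hη0
  obtain ⟨g, rfl⟩ := hb
  obtain ⟨k, hkK, hkg⟩ := hK g
  have h1 : dist (k • (g • p)) (k • y) < δ/2 := by
    refine hη2 k (g • p) ?_
    calc dist (g • p) y = dist y (g • p) := dist_comm _ _
      _ < η0 := hdb
      _ ≤ η k := Finset.inf'_le η hkK
  have h2 : dist ((k * g) • p) p < δ/2 := mem_ball.mp hkg
  refine ⟨k • y, MulAction.mem_orbit y k, ?_⟩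
  calc dist p (k • y) ≤ dist p ((k * g) • p) + dist ((k * g) • p) (k • y) := dist_triangle _ _ _
    _ = dist ((k * g) • p) p + dist (k • (g • p)) (k • y) := by rw [dist_comm, mul_smul]
    _ < δ/2 + δ/2 := add_lt_add h2 h1
    _ = δ := by ring

/-- orbit closures of points in the orbit closure of an AP point coincide -/
lemma closure_orbit_eq_of_ap (hcont : ∀ g : G, Continuous fun y : X => g • y) {p y : X}
    (hp : IsAlmostPeriodicPt G p) (hy : y ∈ closure (MulAction.orbit G p)) :
    closure (MulAction.orbit G y) = closure (MulAction.orbit G p) := by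
  apply le_antisymm
  · refine closure_minimal ?_ isClosed_closure
    rintro u ⟨g, rfl⟩
    exact smul_mem_closure_orbit hcont hy g
  · refine closure_minimal ?_ isClosed_closure
    rintro u ⟨g, rfl⟩
    exact smul_mem_closure_orbit hcont (ap_mem_closure_orbit hcont hp hy) g

/-- an AP point belongs to its own minimal center -/
lemma ap_mem_minCenter {F : D → Finset G} (hFol : IsFolnerNet F) {p : X}
    (hp : IsAlmostPeriodicPt G p) : p ∈ minCenter F p := by
  intro U hU hpU
  exact upperDensity_pos_of_syndetic hFol (hp U hU hpU)

/-- for an AP point the minimal center is the orbit closure -/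
lemma minCenter_eq_closure_orbit {F : D → Finset G} (hFol : IsFolnerNet F)
    (hcont : ∀ g : G, Continuous fun y : X => g • y) {p : X}
    (hp : IsAlmostPeriodicPt G p) :
    minCenter F p = closure (MulAction.orbit G p) := by
  apply le_antisymm
  · exact minCenter_subset_closure_orbit F p
  · refine closure_minimal ?_ (isClosed_minCenter F p)
    rintro u ⟨g, rfl⟩
    exact smul_mem_minCenter hFol hcont (ap_mem_minCenter hFol hp) g

/-- positive separation of disjoint nonempty compact sets -/
lemma exists_sep {M1 M2 : Set X} (h1 : IsCompact M1) (h2 : IsClosed M2)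
    (hne1 : M1.Nonempty) (hne2 : M2.Nonempty) (hdisj : Disjoint M1 M2) :
    ∃ δ > 0, ∀ a ∈ M1, ∀ b ∈ M2, δ ≤ dist a b := by
  obtain ⟨a0, ha0, hmin⟩ := h1.exists_isMinOn hne1 (continuous_infDist_pt M2).continuousOn
  refine ⟨infDist a0 M2, ?_, ?_⟩
  · rw [gt_iff_lt, ← h2.notMem_iff_infDist_pos hne2]
    exact fun hmem => Set.disjoint_left.mp hdisj ha0 hmem
  · intro a ha b hb
    exact le_trans (hmin ha) (infDist_le_dist_of_mem hb)


end DynAux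
end Aux

/-- Theorem 3.4: if `C_F(x)` is not S-generic and the almost periodic points are dense in
`C_F(x)`, then the system is sensitive near `C_F(x)`. -/
theorem sensitive_of_not_Sgeneric
    {G : Type*} [Group G] [Infinite G] [DecidableEq G]
    {D : Type*} [Preorder D] [IsDirected D (· ≤ ·)] [Nonempty D]
    {X : Type*} [MetricSpace X] [CompactSpace X] [MulAction G X]
    (hcont : ∀ g : G, Continuous fun y : X => g • y)
    (Fol : D → Finset G) (hFol : IsFolnerNet Fol) (x : X)
    (hnS : ¬ ∃ z ∈ minCenter Fol x, minCenter Fol z = minCenter Fol x)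
    (hdense : minCenter Fol x ⊆
      closure {z : X | z ∈ minCenter Fol x ∧ IsAlmostPeriodicPt G z}) :
    ∃ ε : ℝ, 0 < ε ∧ ∀ a : X, ∀ xhat ∈ minCenter Fol x,
      ∀ U : Set X, IsOpen U → xhat ∈ U →
        ∃ y ∈ U, ∃ g : G, ε ≤ dist (g • a) (g • y) := by
  classical
  by_cases hC : (minCenter Fol x).Nonempty
  swap
  · exact ⟨1, one_pos, fun a xhat hxhat U hU hxU => absurd ⟨xhat, hxhat⟩ hC⟩
  by_cases hpair : ∃ p1 ∈ minCenter Fol x, ∃ p2 ∈ minCenter Fol x,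
      IsAlmostPeriodicPt G p1 ∧ IsAlmostPeriodicPt G p2 ∧
      closure (MulAction.orbit G p1) ≠ closure (MulAction.orbit G p2)
  swap
  · -- contradiction with hnS
    exfalso
    obtain ⟨x0, hx0⟩ := hC
    have hx0' := hdense hx0
    have hAPne : {z : X | z ∈ minCenter Fol x ∧ IsAlmostPeriodicPt G z}.Nonempty := by
      by_contra h
      rw [Set.not_nonempty_iff_eq_empty] at h
      rw [h, closure_empty] at hx0'
      exact hx0'
    obtain ⟨p, hpC, hpAP⟩ := hAPne
    push_neg at hpair
    have hMC : closure (MulAction.orbit G p) ⊆ minCenter Fol x := by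
      refine closure_minimal ?_ (isClosed_minCenter Fol x)
      rintro u ⟨g, rfl⟩
      exact smul_mem_minCenter hFol hcont hpC g
    have hCM : minCenter Fol x ⊆ closure (MulAction.orbit G p) := by
      refine hdense.trans (closure_minimal ?_ isClosed_closure)
      rintro q ⟨hqC, hqAP⟩
      have h1 : q ∈ closure (MulAction.orbit G q) :=
        subset_closure (MulAction.mem_orbit_self q)
      rwa [hpair q hqC p hpC hqAP hpAP] at h1
    have hfin : minCenter Fol p = minCenter Fol x :=
      (minCenter_eq_closure_orbit hFol hcont hpAP).trans (le_antisymm hMC hCM)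
    exact hnS ⟨p, hpC, hfin⟩
  obtain ⟨p1, hp1C, p2, hp2C, hap1, hap2, hM12⟩ := hpair
  have hdisj : Disjoint (closure (MulAction.orbit G p1)) (closure (MulAction.orbit G p2)) := by
    by_contra h
    obtain ⟨w, hw1, hw2⟩ := Set.not_disjoint_iff.mp h
    exact hM12 ((closure_orbit_eq_of_ap hcont hap1 hw1).symm.trans
      (closure_orbit_eq_of_ap hcont hap2 hw2))
  obtain ⟨δ4, hδ4, hsep⟩ := exists_sep isClosed_closure.isCompact isClosed_closure
    ⟨p1, subset_closure (MulAction.mem_orbit_self p1)⟩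
    ⟨p2, subset_closure (MulAction.mem_orbit_self p2)⟩ hdisj
  set δ := δ4 / 4 with hδdef
  have hδ : 0 < δ := by positivity
  refine ⟨δ/4, by positivity, ?_⟩
  intro a xhat hxhat U hU hxU
  -- one of the two orbit closures is 2δ-far from xhat
  obtain ⟨q, hqC, hqM⟩ : ∃ q ∈ minCenter Fol x, ∀ g : G, 2*δ ≤ dist xhat (g • q) := by
    have hfar : (∀ m ∈ closure (MulAction.orbit G p1), 2*δ ≤ dist xhat m) ∨
        (∀ m ∈ closure (MulAction.orbit G p2), 2*δ ≤ dist xhat m) := by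
      by_contra h
      push_neg at h
      obtain ⟨⟨m1, hm1, hd1⟩, ⟨m2, hm2, hd2⟩⟩ := h
      have h1 := hsep m1 hm1 m2 hm2
      have h2 : dist m1 m2 ≤ dist m1 xhat + dist xhat m2 := dist_triangle _ _ _
      have h3 : dist m1 xhat = dist xhat m1 := dist_comm _ _
      rw [hδdef] at hd1 hd2
      linarith
    rcases hfar with h | h
    · exact ⟨p1, hp1C, fun g => h _ (subset_closure (MulAction.mem_orbit p1 g))⟩
    · exact ⟨p2, hp2C, fun g => h _ (subset_closure (MulAction.mem_orbit p2 g))⟩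
  set U0 := U ∩ ball xhat (δ/2) with hU0def
  have hU0open : IsOpen U0 := hU.inter isOpen_ball
  have hxU0 : xhat ∈ U0 := ⟨hxU, mem_ball_self (by linarith)⟩
  -- pick an AP point p in U0
  obtain ⟨p, hpU0, hpC, hpAP⟩ :
      ∃ p, p ∈ U0 ∧ p ∈ minCenter Fol x ∧ IsAlmostPeriodicPt G p := by
    obtain ⟨p, hp1, hp2, hp3⟩ := _root_.mem_closure_iff.mp (hdense hxhat) U0 hU0open hxU0
    exact ⟨p, hp1, hp2, hp3⟩
  -- syndeticity data for p
  obtain ⟨K, hK⟩ := hpAP (ball p (δ/2)) isOpen_ball (mem_ball_self (by linarith))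
  have hKne : K.Nonempty := by obtain ⟨k, hk, -⟩ := hK 1; exact ⟨k, hk⟩
  -- continuity moduli at q
  have hη : ∀ k : G, ∃ η > 0, ∀ w : X, dist w q < η → dist (k • w) (k • q) < δ/2 := by
    intro k
    exact Metric.continuous_iff.mp (hcont k) q (δ/2) (by linarith)
  choose η hη1 hη2 using hη
  set η0 := K.inf' hKne η with hη0def
  have hη0 : 0 < η0 := by
    rw [hη0def, Finset.lt_inf'_iff]
    exact fun k _ => hη1 k
  -- the orbit of x visits U0 and the η0-ball around q
  obtain ⟨g0, hg0⟩ := nonempty_of_upperDensity_pos (hxhat U0 hU0open hxU0)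
  obtain ⟨g1, hg1⟩ := nonempty_of_upperDensity_pos (hqC (ball q η0) isOpen_ball
    (mem_ball_self hη0))
  set y := g0 • x with hydef
  have hyU0 : y ∈ U0 := hg0
  set g := g1 * g0⁻¹ with hgdef
  have hgy : g • y = g1 • x := by
    rw [hgdef, hydef, smul_smul, mul_assoc, inv_mul_cancel, mul_one]
  obtain ⟨k, hkK, hkmem⟩ := hK g
  set g' := k * g with hg'def
  have hyq : dist (g' • y) (k • q) < δ/2 := by
    have h1 : g' • y = k • (g1 • x) := by rw [hg'def, mul_smul, hgy]
    rw [h1]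
    refine hη2 k _ ?_
    calc dist (g1 • x) q < η0 := mem_ball.mp hg1
      _ ≤ η k := Finset.inf'_le η hkK
  have hpp : dist (g' • p) p < δ/2 := mem_ball.mp hkmem
  have hpxhat : dist p xhat < δ/2 := by
    have := hpU0.2
    rw [mem_ball] at this
    linarith
  have hbig : δ/2 ≤ dist (g' • p) (g' • y) := by
    have h2δ := hqM k
    have t1 : dist xhat (k • q) ≤ dist xhat p + dist p (k • q) := dist_triangle _ _ _
    have t2 : dist p (k • q) ≤ dist p (g' • p) + dist (g' • p) (k • q) := dist_triangle _ _ _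
    have t3 : dist (g' • p) (k • q) ≤ dist (g' • p) (g' • y) + dist (g' • y) (k • q) :=
      dist_triangle _ _ _
    have c1 : dist xhat p = dist p xhat := dist_comm _ _
    have c2 : dist p (g' • p) = dist (g' • p) p := dist_comm _ _
    linarith
  rcases le_or_gt (δ/4) (dist (g' • a) (g' • y)) with h | h
  · exact ⟨y, hyU0.1, g', h⟩
  · refine ⟨p, hpU0.1, g', ?_⟩
    have t : dist (g' • p) (g' • y) ≤ dist (g' • p) (g' • a) + dist (g' • a) (g' • y) :=
      dist_triangle _ _ _
    have c : dist (g' • p) (g' • a) = dist (g' • a) (g' • p) := dist_comm _ _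
    linarith
end
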